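/- arXiv:2305.04109 — 3 statements merged into one kernel-verified Lean document; each statement's English description precedes it below -/
import Mathlib

section
/- In the quotient group G = ⟨γ_1,…,γ_n ∣ γ_1 γ_2 ⋯ γ_n = 1⟩ (a free group of rank n−1), the n-th power of the composite of the induced Hurwitz automorphisms, (ω_1 ∘ ω_2 ∘ ⋯ ∘ ω_{n−1})^n, is the identity automorphism of G. -/
section Stmt5Aux

variable {n : ℕ}
  (ω : ℕ → Monoid.End (PresentedGroup
      ({(List.ofFn (fun j : Fin n => FreeGroup.of j)).prod} : Set (FreeGroup (Fin n)))))

private abbrev stmt5G (n : ℕ) :=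
  PresentedGroup ({(List.ofFn (fun j : Fin n => FreeGroup.of j)).prod} : Set (FreeGroup (Fin n)))

/-- the `m % n`-th generator -/
private def stmt5γ (hn : 0 < n) (m : ℕ) : stmt5G n :=
  PresentedGroup.of ⟨m % n, Nat.mod_lt m hn⟩

variable (hn : 0 < n)

private lemma stmt5γ_eq (m : ℕ) (hm : m < n) :
    stmt5γ hn m = PresentedGroup.of ⟨m, hm⟩ := by
  unfold stmt5γ
  congr 1
  exact Fin.ext (Nat.mod_eq_of_lt hm)

private lemma stmt5γ_mod (m : ℕ) : stmt5γ hn (m % n) = stmt5γ hn m := by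
  unfold stmt5γ
  congr 1
  exact Fin.ext (Nat.mod_mod_of_dvd m dvd_rfl)

/-- prefix product ω_0 ∘ ⋯ ∘ ω_{k-1} -/
private def stmt5ρ (k : ℕ) : Monoid.End (stmt5G n) := ((List.range k).map ω).prod

private lemma stmt5ρ_succ (k : ℕ) : stmt5ρ ω (k + 1) = stmt5ρ ω k * ω k := by
  unfold stmt5ρ
  rw [List.range_succ, List.map_append, List.prod_append, List.map_singleton,
    List.prod_singleton]

variable (hω : ∀ (i : ℕ) (hi : i + 1 < n),
      ω i (PresentedGroup.of ⟨i, Nat.lt_of_succ_lt hi⟩) =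
        PresentedGroup.of (⟨i, Nat.lt_of_succ_lt hi⟩ : Fin n) * PresentedGroup.of (⟨i + 1, hi⟩ : Fin n) *
          (PresentedGroup.of (⟨i, Nat.lt_of_succ_lt hi⟩ : Fin n))⁻¹ ∧
      ω i (PresentedGroup.of (⟨i + 1, hi⟩ : Fin n)) = PresentedGroup.of (⟨i, Nat.lt_of_succ_lt hi⟩ : Fin n) ∧
      ∀ j : Fin n, (j : ℕ) ≠ i → (j : ℕ) ≠ i + 1 →
        ω i (PresentedGroup.of j) = PresentedGroup.of j)

include hω

private lemma stmt5hω₁ (i : ℕ) (hi : i + 1 < n) :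
    ω i (stmt5γ hn i) = stmt5γ hn i * stmt5γ hn (i + 1) * (stmt5γ hn i)⁻¹ := by
  rw [stmt5γ_eq hn i (by omega), stmt5γ_eq hn (i+1) hi]
  exact (hω i hi).1

private lemma stmt5hω₂ (i : ℕ) (hi : i + 1 < n) :
    ω i (stmt5γ hn (i + 1)) = stmt5γ hn i := by
  rw [stmt5γ_eq hn i (by omega), stmt5γ_eq hn (i+1) hi]
  exact (hω i hi).2.1

private lemma stmt5hω₃ (i : ℕ) (hi : i + 1 < n) (j : ℕ) (hj : j < n)
    (h1 : j ≠ i) (h2 : j ≠ i + 1) : ω i (stmt5γ hn j) = stmt5γ hn j := by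
  rw [stmt5γ_eq hn j hj]
  exact (hω i hi).2.2 ⟨j, hj⟩ h1 h2

/-- full description of the prefix products on generators -/
private lemma stmt5ρ_spec : ∀ k, k ≤ n - 1 → ∀ j,
    (j < k → stmt5ρ ω k (stmt5γ hn j) =
      stmt5γ hn 0 * stmt5γ hn (j + 1) * (stmt5γ hn 0)⁻¹) ∧
    (j = k → stmt5ρ ω k (stmt5γ hn j) = stmt5γ hn 0) ∧
    (k < j → j < n → stmt5ρ ω k (stmt5γ hn j) = stmt5γ hn j) := by
  intro k
  induction k with
  | zero =>
    intro _ j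
    refine ⟨fun h => absurd h (Nat.not_lt_zero j), fun h => ?_, fun _ _ => rfl⟩
    subst h; rfl
  | succ k ih =>
    intro hk j
    have hk' : k ≤ n - 1 := by omega
    have hkn : k + 1 < n := by omega
    have happ : ∀ x, stmt5ρ ω (k+1) x = stmt5ρ ω k (ω k x) := by
      intro x; rw [stmt5ρ_succ]; rfl
    refine ⟨fun hj => ?_, fun hj => ?_, fun hj hjn => ?_⟩
    · rcases Nat.lt_or_ge j k with hjk | hjk
      · rw [happ, stmt5hω₃ ω hn hω k hkn j (by omega) (by omega) (by omega)]
        exact (ih hk' j).1 hjk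
      · have hjk : j = k := by omega
        subst hjk
        rw [happ, stmt5hω₁ ω hn hω j hkn, map_mul, map_mul, map_inv]
        rw [(ih hk' j).2.1 rfl, (ih hk' (j+1)).2.2 (by omega) (by omega)]
    · subst hj
      rw [happ, stmt5hω₂ ω hn hω k hkn]
      exact (ih hk' k).2.1 rfl
    · rw [happ, stmt5hω₃ ω hn hω k hkn j hjn (by omega) (by omega)]
      exact (ih hk' j).2.2 (by omega) hjn

/-- the composite σ = ω_0 ∘ ⋯ ∘ ω_{n-2} sends γ_m to γ_0 γ_{m+1} γ_0⁻¹ -/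
private lemma stmt5σ_spec (m : ℕ) :
    stmt5ρ ω (n - 1) (stmt5γ hn m) =
      stmt5γ hn 0 * stmt5γ hn (m + 1) * (stmt5γ hn 0)⁻¹ := by
  rw [← stmt5γ_mod hn m]
  have hm : m % n < n := Nat.mod_lt m hn
  have h1 : stmt5γ hn (m % n + 1) = stmt5γ hn (m + 1) := by
    rw [← stmt5γ_mod hn (m % n + 1), Nat.mod_add_mod, stmt5γ_mod]
  rcases Nat.lt_or_ge (m % n) (n - 1) with h | h
  · rw [(stmt5ρ_spec ω hn hω (n-1) le_rfl (m % n)).1 h, h1]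
  · have hmn : m % n = n - 1 := by omega
    rw [(stmt5ρ_spec ω hn hω (n-1) le_rfl (m % n)).2.1 hmn]
    have h2 : stmt5γ hn (m % n + 1) = stmt5γ hn 0 := by
      rw [← stmt5γ_mod hn (m % n + 1), hmn]
      have : (n - 1 + 1) % n = 0 % n := by
        rw [Nat.sub_add_cancel hn, Nat.mod_self, Nat.zero_mod]
      rw [this, stmt5γ_mod]
    rw [← h1, h2]
    group

/-- partial products of generators -/
private def stmt5c (hn : 0 < n) (k : ℕ) : stmt5G n :=
  ((List.range k).map (stmt5γ hn)).prod

omit hω in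
private lemma stmt5c_succ (k : ℕ) :
    stmt5c hn k * stmt5γ hn k = stmt5c hn (k + 1) := by
  unfold stmt5c
  rw [List.range_succ, List.map_append, List.prod_append, List.map_singleton,
    List.prod_singleton]

private lemma stmt5σ_c (k : ℕ) :
    stmt5ρ ω (n - 1) (stmt5c hn k) = stmt5c hn (k + 1) * (stmt5γ hn 0)⁻¹ := by
  induction k with
  | zero =>
    have h0 : stmt5c hn 0 = 1 := rfl
    have h1 : stmt5c hn 1 = stmt5γ hn 0 := by
      rw [← stmt5c_succ (n := n) hn 0, h0, one_mul]
    rw [h0, map_one, h1, mul_inv_cancel]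
  | succ k ih =>
    rw [← stmt5c_succ (n := n) hn k, map_mul, ih, stmt5σ_spec ω hn hω k,
      ← stmt5c_succ (n := n) hn (k+1)]
    group

/-- powers of σ on generators -/
private lemma stmt5pow (k : ℕ) (m : ℕ) :
    ((stmt5ρ ω (n - 1)) ^ k) (stmt5γ hn m) =
      stmt5c hn k * stmt5γ hn (m + k) * (stmt5c hn k)⁻¹ := by
  induction k with
  | zero =>
    have h0 : stmt5c hn 0 = 1 := rfl
    have h1 : ((stmt5ρ ω (n - 1)) ^ 0) (stmt5γ hn m) = stmt5γ hn m := rfl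
    rw [h1, h0, Nat.add_zero]
    group
  | succ k ih =>
    have : ((stmt5ρ ω (n - 1)) ^ (k+1)) (stmt5γ hn m) =
        stmt5ρ ω (n - 1) (((stmt5ρ ω (n - 1)) ^ k) (stmt5γ hn m)) := by
      rw [pow_succ']; rfl
    rw [this, ih, map_mul, map_mul, map_inv, stmt5σ_c ω hn hω, stmt5σ_spec ω hn hω,
      ← Nat.add_assoc]
    group

omit hω in
private lemma stmt5c_n : stmt5c hn n = 1 := by
  have hlist : (List.range n).map (fun m => FreeGroup.of (⟨m % n, Nat.mod_lt m hn⟩ : Fin n)) =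
      List.ofFn (fun j : Fin n => FreeGroup.of j) := by
    apply List.ext_getElem
    · simp
    · intro i h1 h2
      simp only [List.getElem_map, List.getElem_range, List.getElem_ofFn]
      congr 1
      exact Fin.ext (by simpa using Nat.mod_eq_of_lt (by simpa using h1))
  have h2 : stmt5c hn n = PresentedGroup.mk _
      (((List.range n).map (fun m => FreeGroup.of (⟨m % n, Nat.mod_lt m hn⟩ : Fin n))).prod) := by
    rw [map_list_prod, List.map_map]
    rfl
  rw [h2, hlist]
  refine (QuotientGroup.eq_one_iff _).2 ?_
  exact Subgroup.subset_normalClosure rfl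

private lemma stmt5main (m : ℕ) :
    ((stmt5ρ ω (n - 1)) ^ n) (stmt5γ hn m) = stmt5γ hn m := by
  rw [stmt5pow ω hn hω n m, stmt5c_n (n := n) hn, ← stmt5γ_mod hn (m + n), Nat.add_mod_right,
    stmt5γ_mod]
  group

end Stmt5Aux

/-- In the group `G = ⟨γ_1,…,γ_n ∣ γ_1⋯γ_n = 1⟩`, presented as the quotient of
the free group on `n` generators by the single relator `γ_1⋯γ_n`, the `n`-th power of the
composite of the induced Hurwitz automorphisms `ω_1 ∘ ⋯ ∘ ω_{n-1}` (0-indexed `ω_0,…,ω_{n-2}`,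
each given on generators by `γ_i ↦ γ_i γ_{i+1} γ_i⁻¹`, `γ_{i+1} ↦ γ_i`, fixing the others)
is the identity automorphism of `G`. -/
theorem stmt_5 (n : ℕ)
    (ω : ℕ → Monoid.End (PresentedGroup
      ({(List.ofFn (fun j : Fin n => FreeGroup.of j)).prod} : Set (FreeGroup (Fin n)))))
    (hω : ∀ (i : ℕ) (hi : i + 1 < n),
      ω i (PresentedGroup.of ⟨i, by omega⟩) =
        PresentedGroup.of (⟨i, by omega⟩ : Fin n) * PresentedGroup.of (⟨i + 1, hi⟩ : Fin n) *
          (PresentedGroup.of (⟨i, by omega⟩ : Fin n))⁻¹ ∧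
      ω i (PresentedGroup.of (⟨i + 1, hi⟩ : Fin n)) = PresentedGroup.of (⟨i, by omega⟩ : Fin n) ∧
      ∀ j : Fin n, (j : ℕ) ≠ i → (j : ℕ) ≠ i + 1 →
        ω i (PresentedGroup.of j) = PresentedGroup.of j) :
    ∀ g, ((((List.range (n - 1)).map ω).prod) ^ n) g = g := by
  intro g
  rcases Nat.eq_zero_or_pos n with h0 | hn
  · subst h0; rfl
  · -- the fixed points of σ^n form a subgroup containing all generators
    have key : ∀ j : Fin n,
        ((((List.range (n - 1)).map ω).prod) ^ n) (PresentedGroup.of j) =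
          PresentedGroup.of j := by
      intro j
      have := stmt5main ω hn hω (j : ℕ)
      rwa [stmt5γ_eq hn (j : ℕ) j.isLt, Fin.eta] at this
    exact PresentedGroup.generated_by _
      (MonoidHom.eqLocus ((((List.range (n - 1)).map ω).prod) ^ n) (MonoidHom.id _))
      (fun j => key j) g
end

section
/- Let σ = α_2^{-1} β_1 α_1 β_1^{-1} in the free group π on α_1,…,α_g,β_1,…,β_g,γ_1,…,γ_n (g ≥ 2). The endomorphism a_2 defined by β_1 ↦ σβ_1, β_2 ↦ β_2 σ^{-1}, α_2 ↦ σ α_2 σ^{-1}, and fixing all other generators, is an automorphism and satisfies a_2([α_1,β_1][α_2,β_2]) = [α_1,β_1][α_2,β_2]; hence it preserves the surface relator R. -/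
open scoped commutatorElement

/-- Generators of the fundamental group of a genus-`g` surface with `n` punctures:
`α_1,…,α_g` (inl), `β_1,…,β_g` (inr inl), `γ_1,…,γ_n` (inr inr), 0-indexed. -/
abbrev SurfGen (g n : ℕ) := Fin g ⊕ (Fin g ⊕ Fin n)

/-- The ambient free group on the `2g + n` generators. -/
abbrev SG (g n : ℕ) := FreeGroup (SurfGen g n)

/-- The generator `α_{k+1}`. -/
def A (g n : ℕ) (k : Fin g) : SG g n := FreeGroup.of (Sum.inl k)

/-- The generator `β_{k+1}`. -/
def B (g n : ℕ) (k : Fin g) : SG g n := FreeGroup.of (Sum.inr (Sum.inl k))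

/-- The generator `γ_{k+1}`. -/
def C (g n : ℕ) (k : Fin n) : SG g n := FreeGroup.of (Sum.inr (Sum.inr k))

/-- The surface relator `R = [α_1,β_1]⋯[α_g,β_g]·γ_1⋯γ_n`. -/
def SRel (g n : ℕ) : SG g n :=
  (List.ofFn (fun k : Fin g => ⁅A g n k, B g n k⁆)).prod * (List.ofFn (C g n)).prod

/-- The element `σ = α_2⁻¹ β_1 α_1 β_1⁻¹` (for `g ≥ 2`). -/
def sigmaEl (g n : ℕ) (hg : 2 ≤ g) : SG g n :=
  (A g n ⟨1, hg⟩)⁻¹ * B g n ⟨0, by omega⟩ * A g n ⟨0, by omega⟩ * (B g n ⟨0, by omega⟩)⁻¹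

/-- The endomorphism `a_2`: `β_1 ↦ σβ_1`, `β_2 ↦ β_2σ⁻¹`, `α_2 ↦ σα_2σ⁻¹`,
fixing all other generators. -/
def a2Map (g n : ℕ) (hg : 2 ≤ g) : Monoid.End (SG g n) :=
  FreeGroup.lift fun j =>
    if j = Sum.inr (Sum.inl (⟨0, by omega⟩ : Fin g)) then
      sigmaEl g n hg * B g n ⟨0, by omega⟩
    else if j = Sum.inr (Sum.inl (⟨1, hg⟩ : Fin g)) then
      B g n ⟨1, hg⟩ * (sigmaEl g n hg)⁻¹
    else if j = Sum.inl (⟨1, hg⟩ : Fin g) then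
      sigmaEl g n hg * A g n ⟨1, hg⟩ * (sigmaEl g n hg)⁻¹
    else FreeGroup.of j

lemma a2_of (g n : ℕ) (hg : 2 ≤ g) (j : SurfGen g n) : a2Map g n hg (FreeGroup.of j) =
    if j = Sum.inr (Sum.inl (⟨0, by omega⟩ : Fin g)) then
      sigmaEl g n hg * B g n ⟨0, by omega⟩
    else if j = Sum.inr (Sum.inl (⟨1, hg⟩ : Fin g)) then
      B g n ⟨1, hg⟩ * (sigmaEl g n hg)⁻¹
    else if j = Sum.inl (⟨1, hg⟩ : Fin g) then
      sigmaEl g n hg * A g n ⟨1, hg⟩ * (sigmaEl g n hg)⁻¹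
    else FreeGroup.of j := by
  rw [a2Map]; exact FreeGroup.lift_apply_of ..

section
variable (g n : ℕ) (hg : 2 ≤ g)

lemma a2_A0 : a2Map g n hg (A g n ⟨0, by omega⟩) = A g n ⟨0, by omega⟩ := by
  rw [A, a2_of]; simp [Fin.ext_iff]

lemma a2_A1 : a2Map g n hg (A g n ⟨1, hg⟩) =
    sigmaEl g n hg * A g n ⟨1, hg⟩ * (sigmaEl g n hg)⁻¹ := by
  rw [A, a2_of]; simp [A]

lemma a2_B0 : a2Map g n hg (B g n ⟨0, by omega⟩) = sigmaEl g n hg * B g n ⟨0, by omega⟩ := by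
  rw [B, a2_of]; simp [B]

lemma a2_B1 : a2Map g n hg (B g n ⟨1, hg⟩) = B g n ⟨1, hg⟩ * (sigmaEl g n hg)⁻¹ := by
  rw [B, a2_of]; simp [B, Fin.ext_iff]

lemma a2_A_ge (k : Fin g) (hk : 2 ≤ k.val) : a2Map g n hg (A g n k) = A g n k := by
  rw [A, a2_of]
  rw [if_neg (by simp), if_neg (by simp), if_neg (by simp [Fin.ext_iff]; omega)]

lemma a2_B_ge (k : Fin g) (hk : 2 ≤ k.val) : a2Map g n hg (B g n k) = B g n k := by
  rw [B, a2_of]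
  rw [if_neg (by simp [Fin.ext_iff]; omega), if_neg (by simp [Fin.ext_iff]; omega),
    if_neg (by simp)]

lemma a2_C (k : Fin n) : a2Map g n hg (C g n k) = C g n k := by
  rw [C, a2_of]; simp

lemma a2_sigma : a2Map g n hg (sigmaEl g n hg) = sigmaEl g n hg := by
  rw [sigmaEl, map_mul, map_mul, map_mul, map_inv, map_inv, a2_A0, a2_A1, a2_B0]
  rw [sigmaEl]; group

lemma a2_comm : a2Map g n hg (⁅A g n ⟨0, by omega⟩, B g n ⟨0, by omega⟩⁆ *
      ⁅A g n ⟨1, hg⟩, B g n ⟨1, hg⟩⁆) =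
    ⁅A g n ⟨0, by omega⟩, B g n ⟨0, by omega⟩⁆ * ⁅A g n ⟨1, hg⟩, B g n ⟨1, hg⟩⁆ := by
  simp only [commutatorElement_def, map_mul, map_inv, a2_A0, a2_A1, a2_B0, a2_B1]
  rw [sigmaEl]; group

end
def a2InvMap (g n : ℕ) (hg : 2 ≤ g) : Monoid.End (SG g n) :=
  FreeGroup.lift fun j =>
    if j = Sum.inr (Sum.inl (⟨0, by omega⟩ : Fin g)) then
      (sigmaEl g n hg)⁻¹ * B g n ⟨0, by omega⟩
    else if j = Sum.inr (Sum.inl (⟨1, hg⟩ : Fin g)) then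
      B g n ⟨1, hg⟩ * sigmaEl g n hg
    else if j = Sum.inl (⟨1, hg⟩ : Fin g) then
      (sigmaEl g n hg)⁻¹ * A g n ⟨1, hg⟩ * sigmaEl g n hg
    else FreeGroup.of j

lemma a2inv_of (g n : ℕ) (hg : 2 ≤ g) (j : SurfGen g n) : a2InvMap g n hg (FreeGroup.of j) =
    if j = Sum.inr (Sum.inl (⟨0, by omega⟩ : Fin g)) then
      (sigmaEl g n hg)⁻¹ * B g n ⟨0, by omega⟩
    else if j = Sum.inr (Sum.inl (⟨1, hg⟩ : Fin g)) then
      B g n ⟨1, hg⟩ * sigmaEl g n hg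
    else if j = Sum.inl (⟨1, hg⟩ : Fin g) then
      (sigmaEl g n hg)⁻¹ * A g n ⟨1, hg⟩ * sigmaEl g n hg
    else FreeGroup.of j := by
  rw [a2InvMap]; exact FreeGroup.lift_apply_of ..

section
variable (g n : ℕ) (hg : 2 ≤ g)

lemma a2inv_A0 : a2InvMap g n hg (A g n ⟨0, by omega⟩) = A g n ⟨0, by omega⟩ := by
  rw [A, a2inv_of]; simp [Fin.ext_iff]

lemma a2inv_A1 : a2InvMap g n hg (A g n ⟨1, hg⟩) =
    (sigmaEl g n hg)⁻¹ * A g n ⟨1, hg⟩ * sigmaEl g n hg := by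
  rw [A, a2inv_of]; simp [A]

lemma a2inv_B0 : a2InvMap g n hg (B g n ⟨0, by omega⟩) =
    (sigmaEl g n hg)⁻¹ * B g n ⟨0, by omega⟩ := by
  rw [B, a2inv_of]; simp [B]

lemma a2inv_B1 : a2InvMap g n hg (B g n ⟨1, hg⟩) = B g n ⟨1, hg⟩ * sigmaEl g n hg := by
  rw [B, a2inv_of]; simp [B, Fin.ext_iff]

lemma a2inv_sigma : a2InvMap g n hg (sigmaEl g n hg) = sigmaEl g n hg := by
  rw [sigmaEl, map_mul, map_mul, map_mul, map_inv, map_inv, a2inv_A0, a2inv_A1, a2inv_B0]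
  rw [sigmaEl]; group

lemma a2_left_inv : (a2InvMap g n hg).comp (a2Map g n hg) = MonoidHom.id (SG g n) := by
  apply FreeGroup.ext_hom
  intro x
  simp only [MonoidHom.comp_apply, MonoidHom.id_apply]
  show a2InvMap g n hg (a2Map g n hg (FreeGroup.of x)) = FreeGroup.of x
  rw [a2_of]
  rcases x with ⟨kv, hk⟩ | ⟨kv, hk⟩ | k
  · rcases kv with _ | _ | kv
    · rw [if_neg (by simp), if_neg (by simp), if_neg (by simp [Fin.ext_iff]), a2inv_of,
        if_neg (by simp), if_neg (by simp), if_neg (by simp [Fin.ext_iff])]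
    · rw [if_neg (by simp), if_neg (by simp), if_pos rfl, map_mul, map_mul, map_inv,
        a2inv_sigma]
      have : FreeGroup.of (Sum.inl (⟨1, hg⟩ : Fin g)) = A g n ⟨1, hg⟩ := rfl
      rw [this, a2inv_A1, A]
      group
    · rw [if_neg (by simp), if_neg (by simp), if_neg (by simp [Fin.ext_iff]), a2inv_of,
        if_neg (by simp), if_neg (by simp), if_neg (by simp [Fin.ext_iff])]
  · rcases kv with _ | _ | kv
    · rw [if_pos rfl, map_mul, a2inv_sigma]
      have : FreeGroup.of (Sum.inr (Sum.inl (⟨0, by omega⟩ : Fin g))) = B g n ⟨0, by omega⟩ := rfl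
      rw [this, a2inv_B0, B]
      group
    · rw [if_neg (by simp [Fin.ext_iff]), if_pos rfl, map_mul, map_inv, a2inv_sigma]
      have : FreeGroup.of (Sum.inr (Sum.inl (⟨1, hg⟩ : Fin g))) = B g n ⟨1, hg⟩ := rfl
      rw [this, a2inv_B1, B]
      group
    · rw [if_neg (by simp [Fin.ext_iff]), if_neg (by simp [Fin.ext_iff]), if_neg (by simp),
        a2inv_of, if_neg (by simp [Fin.ext_iff]), if_neg (by simp [Fin.ext_iff]),
        if_neg (by simp)]
  · rw [if_neg (by simp), if_neg (by simp), if_neg (by simp), a2inv_of,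
      if_neg (by simp), if_neg (by simp), if_neg (by simp)]

lemma a2_right_inv : (a2Map g n hg).comp (a2InvMap g n hg) = MonoidHom.id (SG g n) := by
  apply FreeGroup.ext_hom
  intro x
  simp only [MonoidHom.comp_apply, MonoidHom.id_apply]
  show a2Map g n hg (a2InvMap g n hg (FreeGroup.of x)) = FreeGroup.of x
  rw [a2inv_of]
  rcases x with ⟨kv, hk⟩ | ⟨kv, hk⟩ | k
  · rcases kv with _ | _ | kv
    · rw [if_neg (by simp), if_neg (by simp), if_neg (by simp [Fin.ext_iff]), a2_of,
        if_neg (by simp), if_neg (by simp), if_neg (by simp [Fin.ext_iff])]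
    · rw [if_neg (by simp), if_neg (by simp), if_pos rfl, map_mul, map_mul, map_inv,
        a2_sigma]
      have : FreeGroup.of (Sum.inl (⟨1, hg⟩ : Fin g)) = A g n ⟨1, hg⟩ := rfl
      rw [this, a2_A1, A]
      group
    · rw [if_neg (by simp), if_neg (by simp), if_neg (by simp [Fin.ext_iff]), a2_of,
        if_neg (by simp), if_neg (by simp), if_neg (by simp [Fin.ext_iff])]
  · rcases kv with _ | _ | kv
    · rw [if_pos rfl, map_mul, map_inv, a2_sigma]
      have : FreeGroup.of (Sum.inr (Sum.inl (⟨0, by omega⟩ : Fin g))) = B g n ⟨0, by omega⟩ := rfl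
      rw [this, a2_B0, B]
      group
    · rw [if_neg (by simp [Fin.ext_iff]), if_pos rfl, map_mul, a2_sigma]
      have : FreeGroup.of (Sum.inr (Sum.inl (⟨1, hg⟩ : Fin g))) = B g n ⟨1, hg⟩ := rfl
      rw [this, a2_B1, B]
      group
    · rw [if_neg (by simp [Fin.ext_iff]), if_neg (by simp [Fin.ext_iff]), if_neg (by simp),
        a2_of, if_neg (by simp [Fin.ext_iff]), if_neg (by simp [Fin.ext_iff]),
        if_neg (by simp)]
  · rw [if_neg (by simp), if_neg (by simp), if_neg (by simp), a2_of,
      if_neg (by simp), if_neg (by simp), if_neg (by simp)]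

end

lemma ofFn_two_split {α : Type*} (m : ℕ) (F : Fin (m + 2) → α) :
    List.ofFn F = F ⟨0, by omega⟩ :: F ⟨1, by omega⟩ ::
      List.ofFn (fun i : Fin m => F ⟨i.val + 2, by omega⟩) := by
  rw [List.ofFn_succ, List.ofFn_succ]
  refine congrArg₂ _ (congrArg F (by ext; simp)) (congrArg₂ _ (congrArg F (by ext; simp)) ?_)
  exact congrArg List.ofFn (funext fun i => congrArg F (by ext; simp [Fin.succ]))

lemma a2_comm_ge (g n : ℕ) (hg : 2 ≤ g) (k : Fin g) (hk : 2 ≤ k.val) :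
    a2Map g n hg ⁅A g n k, B g n k⁆ = ⁅A g n k, B g n k⁆ := by
  simp only [commutatorElement_def, map_mul, map_inv, a2_A_ge g n hg k hk, a2_B_ge g n hg k hk]


/-- `a_2` is an automorphism of `π`, fixes `[α_1,β_1][α_2,β_2]`,
and hence preserves the surface relator `R`. -/
theorem stmt_10 (g n : ℕ) (hg : 2 ≤ g) :
    (∃ φ : SG g n ≃* SG g n, ∀ w, φ w = a2Map g n hg w) ∧
    a2Map g n hg (⁅A g n ⟨0, by omega⟩, B g n ⟨0, by omega⟩⁆ * ⁅A g n ⟨1, hg⟩, B g n ⟨1, hg⟩⁆) =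
      ⁅A g n ⟨0, by omega⟩, B g n ⟨0, by omega⟩⁆ * ⁅A g n ⟨1, hg⟩, B g n ⟨1, hg⟩⁆ ∧
    a2Map g n hg (SRel g n) = SRel g n := by
  refine ⟨⟨MonoidHom.toMulEquiv (a2Map g n hg) (a2InvMap g n hg)
      (a2_left_inv g n hg) (a2_right_inv g n hg), fun w => rfl⟩, a2_comm g n hg, ?_⟩
  obtain ⟨m, rfl⟩ : ∃ m, g = m + 2 := ⟨g - 2, by omega⟩
  rw [SRel, map_mul, map_list_prod, map_list_prod, List.map_ofFn, List.map_ofFn]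
  refine congrArg₂ (· * ·) ?_ ?_
  · rw [ofFn_two_split, ofFn_two_split m (fun k => ⁅A (m+2) n k, B (m+2) n k⁆),
      List.prod_cons, List.prod_cons, List.prod_cons, List.prod_cons, ← mul_assoc, ← mul_assoc]
    have h := a2_comm (m + 2) n hg
    rw [map_mul] at h
    refine congrArg₂ _ ?_ ?_
    · exact h
    · refine congrArg List.prod (congrArg List.ofFn (funext fun i => ?_))
      exact a2_comm_ge (m + 2) n hg ⟨i.val + 2, by omega⟩ (by simp)
  · exact congrArg List.prod (congrArg List.ofFn (funext fun k => a2_C (m + 2) n hg k))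
end

section
/- With the notation a_i and λ as above (λ = (γ_j⋯γ_n)α_1, j = i−2g+2), the automorphism a_i maps the surface relator R = [α_1,β_1]⋯[α_g,β_g]·γ_1⋯γ_n to a conjugate of R; in particular the image of R in any quotient where R = 1 is again trivial. -/
open scoped commutatorElement

def lamEl (g n i : ℕ) (hg : 0 < g) : SG g n :=
  ((List.ofFn (C g n)).drop (i - 2 * g + 1)).prod * A g n ⟨0, hg⟩

/-- The endomorphism `a_i` (`2g ≤ i ≤ 2g+n-2`): `β_1 ↦ β_1 λ`, `α_1 ↦ λ⁻¹ α_1 λ`,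
`γ_k ↦ λ⁻¹ γ_k λ` for `j ≤ k ≤ n`, fixing all other generators. -/
def aiMap (g n i : ℕ) (hg : 0 < g) : Monoid.End (SG g n) :=
  FreeGroup.lift fun j =>
    match j with
    | Sum.inr (Sum.inl k) =>
        if (k : ℕ) = 0 then B g n k * lamEl g n i hg
        else FreeGroup.of (Sum.inr (Sum.inl k))
    | Sum.inl k =>
        if (k : ℕ) = 0 then (lamEl g n i hg)⁻¹ * A g n k * lamEl g n i hg
        else FreeGroup.of (Sum.inl k)
    | Sum.inr (Sum.inr k) =>
        if i - 2 * g + 1 ≤ (k : ℕ) then (lamEl g n i hg)⁻¹ * C g n k * lamEl g n i hg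
        else FreeGroup.of (Sum.inr (Sum.inr k))


private lemma conj_list_prod {G : Type*} [Group G] (u : G) (l : List G) :
    (l.map (fun x => u⁻¹ * x * u)).prod = u⁻¹ * l.prod * u := by
  induction l with
  | nil => simp
  | cons a t ih => simp only [List.map_cons, List.prod_cons, ih]; group

private lemma aiMap_C_lt (g n i : ℕ) (hg : 0 < g) (k : Fin n)
    (hk : ¬ (i - 2 * g + 1 ≤ (k : ℕ))) : aiMap g n i hg (C g n k) = C g n k := by
  rw [aiMap, C]
  erw [FreeGroup.lift_apply_of]
  simp [C, hk]

private lemma aiMap_C_ge (g n i : ℕ) (hg : 0 < g) (k : Fin n)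
    (hk : i - 2 * g + 1 ≤ (k : ℕ)) :
    aiMap g n i hg (C g n k) = (lamEl g n i hg)⁻¹ * C g n k * lamEl g n i hg := by
  rw [aiMap, C]
  erw [FreeGroup.lift_apply_of]
  simp [C, hk]

/-- `a_i` maps the surface relator `R` to a conjugate of `R`;
in particular the image of `R` in any quotient where `R = 1` is again trivial. -/
theorem stmt_12 (g n i : ℕ) (hg : 1 ≤ g) (hn : 1 ≤ n)
    (h1 : 2 * g ≤ i) (h2 : i ≤ 2 * g + n - 2) :
    (∃ u : SG g n, aiMap g n i hg (SRel g n) = u * SRel g n * u⁻¹) ∧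
    ∀ (H : Type) [inst : Group H] (f : SG g n →* H), f (SRel g n) = 1 →
      f (aiMap g n i hg (SRel g n)) = 1 := by
  suffices h : ∃ u : SG g n, aiMap g n i hg (SRel g n) = u * SRel g n * u⁻¹ by
    refine ⟨h, fun H _ f hf => ?_⟩
    obtain ⟨u, hu⟩ := h
    rw [hu, map_mul, map_mul, map_inv, hf]
    group
  obtain ⟨g', rfl⟩ : ∃ g', g = g' + 1 := ⟨g - 1, (Nat.succ_pred_eq_of_pos hg).symm⟩
  have hφA0 : aiMap (g'+1) n i hg (A (g'+1) n ⟨0, hg⟩) =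
      (lamEl (g'+1) n i hg)⁻¹ * A (g'+1) n ⟨0, hg⟩ * lamEl (g'+1) n i hg := by
    rw [aiMap, A]
    erw [FreeGroup.lift_apply_of]
    simp [A]
  have hφB0 : aiMap (g'+1) n i hg (B (g'+1) n ⟨0, hg⟩) =
      B (g'+1) n ⟨0, hg⟩ * lamEl (g'+1) n i hg := by
    rw [aiMap, B]
    erw [FreeGroup.lift_apply_of]
    simp [B]
  have hfixA : ∀ k : Fin g',
      aiMap (g'+1) n i hg (A (g'+1) n k.succ) = A (g'+1) n k.succ := by
    intro k
    rw [aiMap, A]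
    erw [FreeGroup.lift_apply_of]
    simp [A, Fin.val_succ]
  have hfixB : ∀ k : Fin g',
      aiMap (g'+1) n i hg (B (g'+1) n k.succ) = B (g'+1) n k.succ := by
    intro k
    rw [aiMap, B]
    erw [FreeGroup.lift_apply_of]
    simp [B, Fin.val_succ]
  have hφT : aiMap (g'+1) n i hg
        (List.ofFn (fun k : Fin g' => ⁅A (g'+1) n k.succ, B (g'+1) n k.succ⁆)).prod =
      (List.ofFn (fun k : Fin g' => ⁅A (g'+1) n k.succ, B (g'+1) n k.succ⁆)).prod := by
    rw [map_list_prod, List.map_ofFn]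
    have : (⇑(aiMap (g'+1) n i hg) ∘ fun k : Fin g' => ⁅A (g'+1) n k.succ, B (g'+1) n k.succ⁆)
        = fun k : Fin g' => ⁅A (g'+1) n k.succ, B (g'+1) n k.succ⁆ := by
      funext k
      simp only [Function.comp_apply, map_commutatorElement, hfixA, hfixB]
    rw [this]
  have hcommprod : (List.ofFn (fun k : Fin (g'+1) => ⁅A (g'+1) n k, B (g'+1) n k⁆)).prod =
      ⁅A (g'+1) n ⟨0, hg⟩, B (g'+1) n ⟨0, hg⟩⁆ *
        (List.ofFn (fun k : Fin g' => ⁅A (g'+1) n k.succ, B (g'+1) n k.succ⁆)).prod := by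
    rw [List.ofFn_succ, List.prod_cons]
    rfl
  have hφP : aiMap (g'+1) n i hg
        ((List.ofFn (C (g'+1) n)).take (i - 2*(g'+1) + 1)).prod =
      ((List.ofFn (C (g'+1) n)).take (i - 2*(g'+1) + 1)).prod := by
    rw [map_list_prod]
    congr 1
    apply List.ext_getElem
    · simp
    · intro m hm1 hm2
      have hmlt : m < i - 2*(g'+1) + 1 := by
        simp only [List.length_map, List.length_take, List.length_ofFn] at hm1
        omega
      simp only [List.getElem_map, List.getElem_take, List.getElem_ofFn]
      exact aiMap_C_lt (g'+1) n i hg _ (by simpa using Nat.not_le.mpr hmlt)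
  have hφQ : aiMap (g'+1) n i hg
        ((List.ofFn (C (g'+1) n)).drop (i - 2*(g'+1) + 1)).prod =
      (lamEl (g'+1) n i hg)⁻¹ *
        ((List.ofFn (C (g'+1) n)).drop (i - 2*(g'+1) + 1)).prod * lamEl (g'+1) n i hg := by
    rw [map_list_prod, ← conj_list_prod (lamEl (g'+1) n i hg)]
    congr 1
    apply List.map_congr_left
    intro a ha
    rw [List.mem_iff_getElem] at ha
    obtain ⟨m, hm, rfl⟩ := ha
    simp only [List.getElem_drop, List.getElem_ofFn]
    exact aiMap_C_ge (g'+1) n i hg _ (by simpa using Nat.le_add_right (i - 2*(g'+1) + 1) m)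
  have hΓ : (List.ofFn (C (g'+1) n)).prod =
      ((List.ofFn (C (g'+1) n)).take (i - 2*(g'+1) + 1)).prod *
        ((List.ofFn (C (g'+1) n)).drop (i - 2*(g'+1) + 1)).prod := by
    conv_lhs => rw [← List.take_append_drop (i - 2*(g'+1) + 1) (List.ofFn (C (g'+1) n))]
    rw [List.prod_append]
  have hLQ : lamEl (g'+1) n i hg =
      ((List.ofFn (C (g'+1) n)).drop (i - 2*(g'+1) + 1)).prod * A (g'+1) n ⟨0, hg⟩ := rfl
  refine ⟨(lamEl (g'+1) n i hg)⁻¹ * A (g'+1) n ⟨0, hg⟩ *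
      ((List.ofFn (C (g'+1) n)).drop (i - 2*(g'+1) + 1)).prod, ?_⟩
  rw [SRel, hcommprod, hΓ]
  rw [map_mul, map_mul, map_mul, map_commutatorElement, hφA0, hφB0, hφT, hφP, hφQ]
  rw [hLQ]
  simp only [commutatorElement_def]
  group
end
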